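/- For every base b ≥ 2 and every k ≥ 1, the number of base-b dismal divisors of the repunit (b^k − 1)/(b − 1) equals Σ_{t=1}^{k} T(k,t)·(b−1)^t, where T(k,t) is the number of compositions of k into exactly t parts in which no part exceeds the first part. -/

import Mathlib

/-!
A dismal product `p ⊠ q` has a nonzero digit in position `j` exactly when `j = i + i'` with
`p_i ≠ 0` and `q_i' ≠ 0`, and none of its digits exceeds the largest digit of `q`. Hence `p`
divides the `k`-digit repunit iff `p < b ^ k` and the translates `i + [0, k - max S)`, `i ∈ S`,
cover `[0, k)`, where `S` is the set of positions of the nonzero digits of `p`; the cofactor is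
then the repunit with `k - max S` digits. Each such `S` is the digit support of exactly
`(b - 1) ^ |S|` numbers below `b ^ k`. Reading `S ∪ {k}` as the block boundaries of a composition
of `k`, the covering condition says that no block is longer than the last one, `k - max S`;
reversing the composition gives the compositions counted by `T k t`.
-/

/-- The `i`-th base-`b` digit of `n`. -/
def digit (b n i : ℕ) : ℕ := n / b ^ i % b

/-- Dismal addition in base `b`: digitwise maximum of base-`b` digits. -/
def dadd (b m n : ℕ) : ℕ :=
  ∑ i ∈ Finset.range (m + n + 1), max (digit b m i) (digit b n i) * b ^ i

/-- Dismal multiplication in base `b`: digit convolution with `min` as digit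
product and `max` as digit sum (no carries). -/
def dmul (b m n : ℕ) : ℕ :=
  ∑ k ∈ Finset.range (m + n + 1),
    ((Finset.range (k + 1)).sup fun i => min (digit b m i) (digit b n (k - i))) * b ^ k

/-- The number of base-`b` digits of `n`. -/
def dlen (b n : ℕ) : ℕ := (Nat.digits b n).length

/-- `p` dismally divides `n` in base `b`. -/
def DDvd (b p n : ℕ) : Prop := ∃ q, dmul b p q = n

open scoped Classical in
/-- The finite set of dismal divisors of `n` (every dismal divisor of a
nonzero `n` has at most `dlen b n` digits). -/
noncomputable def ddivisors (b n : ℕ) : Finset ℕ :=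
  (Finset.range (b ^ dlen b n)).filter fun p => DDvd b p n

/-- The dismal sum of a finite set of numbers: digitwise supremum. -/
def ddigitSum (b : ℕ) (S : Finset ℕ) : ℕ :=
  ∑ i ∈ Finset.range (S.sup id + 1), (S.sup fun p => digit b p i) * b ^ i

/-- The number of dismal divisors of `n` in base `b`. -/
noncomputable def dnum (b n : ℕ) : ℕ := (ddivisors b n).card

/-- `T k t`: the number of compositions of `k` into exactly `t` parts in which
no part exceeds the first part. -/
noncomputable def T (k t : ℕ) : ℕ :=
  Nat.card {l : List ℕ // l.length = t ∧ l.sum = k ∧ (∀ x ∈ l, 0 < x) ∧ ∀ x ∈ l, x ≤ l.headI}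

open Finset

def repunit (b k : ℕ) : ℕ := ∑ i ∈ range k, b ^ i

section Digits

variable {b : ℕ}

lemma digit_eq_zero_of_lt_pow {n N i : ℕ} (hn : n < b ^ N) (hi : N ≤ i) : digit b n i = 0 := by
  rcases Nat.eq_zero_or_pos b with rfl | hb
  · rcases N with _ | N <;> simp_all [digit]
  rw [digit, Nat.div_eq_of_lt (hn.trans_le (Nat.pow_le_pow_right hb hi)), Nat.zero_mod]

lemma lt_of_digit_ne_zero (hb : 1 < b) {n i : ℕ} (h : digit b n i ≠ 0) : i < n := by
  by_contra! hni
  exact h (digit_eq_zero_of_lt_pow (hni.trans_lt (Nat.lt_pow_self hb)) le_rfl)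

lemma finFunctionFinEquiv_val_eq_sum {c : ℕ → ℕ} (hc : ∀ i, c i < b) (N : ℕ) :
    (finFunctionFinEquiv (fun i : Fin N => (⟨c i, hc i⟩ : Fin b)) : ℕ) =
      ∑ i ∈ range N, c i * b ^ i := by
  rw [finFunctionFinEquiv_apply, ← Fin.sum_univ_eq_sum_range (fun i => c i * b ^ i)]

lemma digit_finFunctionFinEquiv {k : ℕ} (f : Fin k → Fin b) (i : Fin k) :
    digit b (finFunctionFinEquiv f) i = f i := by
  rw [digit, ← finFunctionFinEquiv_symm_apply_val, Equiv.symm_apply_apply]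

lemma sum_mul_pow_lt {c : ℕ → ℕ} (hc : ∀ i, c i < b) (N : ℕ) :
    ∑ i ∈ range N, c i * b ^ i < b ^ N := by
  rw [← finFunctionFinEquiv_val_eq_sum hc]
  exact Fin.is_lt _

lemma digit_sum_mul_pow {c : ℕ → ℕ} (hc : ∀ i, c i < b) (N j : ℕ) :
    digit b (∑ i ∈ range N, c i * b ^ i) j = if j < N then c j else 0 := by
  split_ifs with hj
  · have h := finFunctionFinEquiv_symm_apply_val
      (finFunctionFinEquiv (fun i : Fin N => (⟨c i, hc i⟩ : Fin b))) ⟨j, hj⟩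
    rw [Equiv.symm_apply_apply, finFunctionFinEquiv_val_eq_sum hc] at h
    exact h.symm
  · exact digit_eq_zero_of_lt_pow (sum_mul_pow_lt hc N) (not_lt.1 hj)

lemma sum_digit_mul_pow {n N : ℕ} (hn : n < b ^ N) : ∑ i ∈ range N, digit b n i * b ^ i = n := by
  have h := congrArg Fin.val (finFunctionFinEquiv.apply_symm_apply (⟨n, hn⟩ : Fin (b ^ N)))
  simp only [finFunctionFinEquiv_apply, finFunctionFinEquiv_symm_apply_val] at h
  rwa [← Fin.sum_univ_eq_sum_range (fun i => digit b n i * b ^ i)]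

lemma eq_of_forall_digit_eq (hb : 1 < b) {m n : ℕ} (h : ∀ i, digit b m i = digit b n i) :
    m = n := by
  have hm : m < b ^ (m + n) := (Nat.lt_pow_self hb).trans_le' (by omega)
  have hn : n < b ^ (m + n) := (Nat.lt_pow_self hb).trans_le' (by omega)
  calc m = ∑ i ∈ range (m + n), digit b m i * b ^ i := (sum_digit_mul_pow hm).symm
    _ = ∑ i ∈ range (m + n), digit b n i * b ^ i := by simp only [h]
    _ = n := sum_digit_mul_pow hn

lemma digit_dmul (hb : 1 < b) (p q j : ℕ) :
    digit b (dmul b p q) j =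
      (range (j + 1)).sup fun i => min (digit b p i) (digit b q (j - i)) := by
  have hlt : ∀ j, ((range (j + 1)).sup fun i => min (digit b p i) (digit b q (j - i))) < b :=
    fun j => (Finset.sup_lt_iff (Nat.bot_eq_zero ▸ by omega)).2 fun i _ =>
      (min_le_left _ _).trans_lt (Nat.mod_lt _ (by omega))
  rw [dmul, digit_sum_mul_pow hlt]
  split_ifs with hj
  · rfl
  refine ((Finset.sup_eq_bot_iff _ _).2 fun i hi => Nat.min_eq_zero_iff.2 ?_).symm
  by_contra! h
  have hp := lt_of_digit_ne_zero hb h.1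
  have hq := lt_of_digit_ne_zero hb h.2
  have := mem_range.1 hi
  omega

lemma digit_dmul_ne_zero_iff (hb : 1 < b) {p q j : ℕ} :
    digit b (dmul b p q) j ≠ 0 ↔ ∃ i ≤ j, digit b p i ≠ 0 ∧ digit b q (j - i) ≠ 0 := by
  simp [digit_dmul hb]

lemma digit_dmul_le (hb : 1 < b) {p q c : ℕ} (hq : ∀ i, digit b q i ≤ c) (j : ℕ) :
    digit b (dmul b p q) j ≤ c := by
  rw [digit_dmul hb]
  exact Finset.sup_le fun i _ => (min_le_right _ _).trans (hq _)

lemma digit_repunit (hb : 1 < b) (k j : ℕ) : digit b (repunit b k) j = if j < k then 1 else 0 := by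
  simpa [repunit] using digit_sum_mul_pow (c := fun _ => 1) (fun _ => hb) k j

lemma digit_repunit_ne_zero_iff (hb : 1 < b) {k j : ℕ} : digit b (repunit b k) j ≠ 0 ↔ j < k := by
  rw [digit_repunit hb]
  split_ifs with h <;> simp [h]

lemma dlen_repunit (hb : 1 < b) (k : ℕ) : dlen b (repunit b k) = k := by
  refine le_antisymm ((Nat.digits_length_le_iff hb _).2 ?_) ?_
  · simpa [repunit] using sum_mul_pow_lt (c := fun _ => 1) (fun _ => hb) k
  · rcases k with _ | k
    · exact Nat.zero_le _
    exact (Nat.lt_digits_length_iff hb _).2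
      (single_le_sum (f := fun i => b ^ i) (fun _ _ => Nat.zero_le _) (mem_range.2 k.lt_succ_self))

end Digits

def digitSupport (b k n : ℕ) : Finset ℕ := {i ∈ range k | digit b n i ≠ 0}

def IsWindowCover (k : ℕ) (S : Finset ℕ) : Prop :=
  ∀ j < k, ∃ i ∈ S, i ≤ j ∧ j < i + (k - S.sup id)

instance (k : ℕ) : DecidablePred (IsWindowCover k) := fun _ => by
  unfold IsWindowCover; infer_instance

section Support

variable {b k : ℕ}

lemma mem_digitSupport_of_lt_pow {n : ℕ} (hn : n < b ^ k) {i : ℕ} :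
    i ∈ digitSupport b k n ↔ digit b n i ≠ 0 := by
  rw [digitSupport, mem_filter, mem_range, and_iff_right_iff_imp]
  intro h
  by_contra! hi
  exact h (digit_eq_zero_of_lt_pow hn hi)

theorem ddvd_repunit_iff (hb : 1 < b) {p : ℕ} (hp : p < b ^ k) :
    DDvd b p (repunit b k) ↔ IsWindowCover k (digitSupport b k p) := by
  set S := digitSupport b k p
  have hS : ∀ i, digit b p i ≠ 0 ↔ i ∈ S := fun i => (mem_digitSupport_of_lt_pow hp).symm
  constructor
  · rintro ⟨q, hq⟩ j hj
    have hprod : ∀ j, j < k ↔ ∃ i ≤ j, i ∈ S ∧ digit b q (j - i) ≠ 0 := fun j => by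
      simp only [← digit_repunit_ne_zero_iff hb, ← hq, digit_dmul_ne_zero_iff hb, hS]
    obtain ⟨i, hij, hiS, hqi⟩ := (hprod j).1 hj
    obtain ⟨m, hmS, hm⟩ := S.exists_mem_eq_sup ⟨i, hiS⟩ id
    -- the top digit `m` of `p` and the digit `j - i` of `q` meet at position `j - i + m`
    have : j - i + m < k := (hprod _).2 ⟨m, by omega, hmS, by rwa [Nat.add_sub_cancel]⟩
    exact ⟨i, hiS, hij, by rw [hm, id]; omega⟩
  · intro hcov
    refine ⟨repunit b (k - S.sup id), eq_of_forall_digit_eq hb fun j => ?_⟩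
    have hle : ∀ i ∈ S, i ≤ S.sup id := fun i hi => le_sup (f := id) hi
    have hsupk : S.sup id ≤ k := Finset.sup_le fun i hi => (mem_range.1 (mem_filter.1 hi).1).le
    have hone : digit b (dmul b p (repunit b (k - S.sup id))) j ≤ 1 :=
      digit_dmul_le hb (fun i => by rw [digit_repunit hb]; split_ifs <;> simp) j
    have hne : digit b (dmul b p (repunit b (k - S.sup id))) j ≠ 0 ↔ j < k := by
      simp only [digit_dmul_ne_zero_iff hb, digit_repunit_ne_zero_iff hb, hS]
      constructor
      · rintro ⟨i, hij, hiS, hji⟩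
        have := hle i hiS
        omega
      · intro hj
        obtain ⟨i, hiS, hij, hji⟩ := hcov j hj
        exact ⟨i, hij, hiS, by omega⟩
    rw [digit_repunit hb]
    split_ifs with hj <;> omega

lemma mem_ddivisors_repunit (hb : 1 < b) {p : ℕ} :
    p ∈ ddivisors b (repunit b k) ↔ p < b ^ k ∧ IsWindowCover k (digitSupport b k p) := by
  simp only [ddivisors, mem_filter, mem_range, dlen_repunit hb]
  exact and_congr_right fun hp => ddvd_repunit_iff hb hp

lemma digitSupport_finFunctionFinEquiv_eq_iff {S : Finset ℕ} (hS : S ⊆ range k)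
    (f : Fin k → Fin b) :
    digitSupport b k (finFunctionFinEquiv f) = S ↔ ∀ i : Fin k, ((f i : ℕ) ≠ 0 ↔ (i : ℕ) ∈ S) := by
  simp only [Finset.ext_iff, digitSupport, mem_filter, mem_range]
  constructor
  · intro h i
    rw [← digit_finFunctionFinEquiv, ← h, and_iff_right i.is_lt]
  · intro h i
    constructor
    · rintro ⟨hi, hne⟩
      exact (h ⟨i, hi⟩).1 (by rwa [← digit_finFunctionFinEquiv f ⟨i, hi⟩])
    · intro hi
      have hik := mem_range.1 (hS hi)
      exact ⟨hik, by rw [digit_finFunctionFinEquiv f ⟨i, hik⟩]; exact (h ⟨i, hik⟩).2 hi⟩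

lemma card_filter_digitSupport_eq (hb : 0 < b) {S : Finset ℕ} (hS : S ⊆ range k) :
    #{n ∈ range (b ^ k) | digitSupport b k n = S} = (b - 1) ^ #S := by
  let e : (Fin k → Fin b) ↪ ℕ := finFunctionFinEquiv.toEmbedding.trans Fin.valEmbedding
  have hrange : range (b ^ k) = univ.map e := by
    ext n
    simp only [mem_range, mem_map, mem_univ, true_and, e, Function.Embedding.trans_apply,
      Equiv.coe_toEmbedding, Fin.valEmbedding_apply]
    exact ⟨fun hn => ⟨finFunctionFinEquiv.symm ⟨n, hn⟩, by simp⟩, fun ⟨f, hf⟩ => hf ▸ Fin.is_lt _⟩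
  have hcard : ∀ i : Fin k, #({x | (x : ℕ) ≠ 0 ↔ (i : ℕ) ∈ S} : Finset (Fin b)) =
      if (i : ℕ) ∈ S then b - 1 else 1 := by
    have : NeZero b := ⟨hb.ne'⟩
    intro i
    split_ifs with h <;> simp [h, filter_ne', filter_eq', card_erase_of_mem]
  calc #{n ∈ range (b ^ k) | digitSupport b k n = S}
      = #{f | digitSupport b k (e f) = S} := by rw [hrange, filter_map, card_map]; rfl
    _ = #(Fintype.piFinset fun i : Fin k =>
          ({x | (x : ℕ) ≠ 0 ↔ (i : ℕ) ∈ S} : Finset (Fin b))) := by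
      congr 1
      ext f
      simp only [e, Function.Embedding.trans_apply, Equiv.coe_toEmbedding, Fin.valEmbedding_apply,
        digitSupport_finFunctionFinEquiv_eq_iff hS, mem_filter, mem_univ, true_and,
        Fintype.mem_piFinset]
    _ = ∏ i ∈ range k, if i ∈ S then b - 1 else 1 := by
      rw [Fintype.card_piFinset, ← Fin.prod_univ_eq_prod_range]; simp only [hcard]
    _ = (b - 1) ^ #S := by rw [prod_ite_mem, prod_const, inter_eq_right.2 hS]

theorem card_ddivisors_repunit (hb : 1 < b) :
    #(ddivisors b (repunit b k)) =
      ∑ S ∈ (range k).powerset with IsWindowCover k S, (b - 1) ^ #S := by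
  have hmaps : Set.MapsTo (digitSupport b k) (ddivisors b (repunit b k))
      ((range k).powerset.filter (IsWindowCover k)) := fun p hp =>
    mem_filter.2 ⟨mem_powerset.2 (filter_subset _ _), ((mem_ddivisors_repunit hb).1 hp).2⟩
  rw [card_eq_sum_card_fiberwise hmaps]
  refine sum_congr rfl fun S hS => ?_
  obtain ⟨hSk, hcov⟩ := mem_filter.1 hS
  rw [← card_filter_digitSupport_eq (by omega) (mem_powerset.1 hSk)]
  congr 1
  ext p
  simp only [mem_filter, mem_ddivisors_repunit hb, mem_range]
  constructor
  · exact fun ⟨⟨hp, _⟩, hpS⟩ => ⟨hp, hpS⟩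
  · exact fun ⟨hp, hpS⟩ => ⟨⟨hp, hpS ▸ hcov⟩, hpS⟩

end Support

namespace Composition

variable {n : ℕ} (c : Composition n)

def blockStarts : Finset ℕ := (range c.length).image c.sizeUpTo

lemma sizeUpTo_injOn : Set.InjOn c.sizeUpTo (Set.Iic c.length) := fun i hi j hj h =>
  congrArg Fin.val (c.boundary.injective (a₁ := ⟨i, Nat.lt_succ_of_le hi⟩)
    (a₂ := ⟨j, Nat.lt_succ_of_le hj⟩) (Fin.ext h))

lemma card_blockStarts : #c.blockStarts = c.length := by
  rw [blockStarts, card_image_of_injOn (c.sizeUpTo_injOn.mono fun i hi => ?_), card_range]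
  exact (mem_range.1 hi).le

lemma map_valEmbedding_boundaries :
    c.boundaries.map Fin.valEmbedding = insert n c.blockStarts := by
  ext x
  simp only [boundaries, map_map, mem_map, mem_univ, true_and, blockStarts, mem_insert, mem_image,
    mem_range, Function.Embedding.trans_apply, RelEmbedding.coe_toEmbedding,
    Fin.valEmbedding_apply, boundary, OrderEmbedding.coe_ofStrictMono, Fin.exists_iff]
  constructor
  · rintro ⟨i, hi, rfl⟩
    rcases Nat.lt_succ_iff_lt_or_eq.1 hi with hi | rfl
    · exact Or.inr ⟨i, hi, rfl⟩
    · exact Or.inl c.sizeUpTo_length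
  · rintro (rfl | ⟨i, hi, rfl⟩)
    · exact ⟨c.length, c.length.lt_succ_self, c.sizeUpTo_length⟩
    · exact ⟨i, hi.trans c.length.lt_succ_self, rfl⟩

lemma blockStarts_subset_range : c.blockStarts ⊆ range n := by
  intro x hx
  obtain ⟨i, hi, rfl⟩ := mem_image.1 hx
  exact mem_range.2 ((c.sizeUpTo_strict_mono (mem_range.1 hi)).trans_le (c.sizeUpTo_le _))

lemma sup_blockStarts_add_last : c.blockStarts.sup id + c.blocks.reverse.headI = n := by
  rcases hL : c.length with _ | L
  · have hnil : c.blocks = [] := List.eq_nil_of_length_eq_zero (by rw [blocks_length, hL])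
    simp [blockStarts, hL, hnil, ← c.blocks_sum]
  have hLlt : L < c.length := by omega
  have hsup : c.blockStarts.sup id = c.sizeUpTo L := by
    refine le_antisymm (Finset.sup_le fun x hx => ?_) (le_sup (f := id) ?_)
    · obtain ⟨i, hi, rfl⟩ := mem_image.1 hx
      exact c.monotone_sizeUpTo (by rw [mem_range] at hi; omega)
    · exact mem_image.2 ⟨L, mem_range.2 hLlt, rfl⟩
  have hlast : c.blocks.reverse.headI = c.blocks[L]'(by rwa [blocks_length]) := by
    have hne : c.blocks ≠ [] := List.ne_nil_of_length_pos (by rw [blocks_length]; omega)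
    conv_lhs => rw [← List.dropLast_append_getLast hne]
    simp [List.getLast_eq_getElem, hL]
  rw [hsup, hlast, ← c.sizeUpTo_succ hLlt, ← hL, c.sizeUpTo_length]

lemma forall_exists_blockStarts_iff (d : ℕ) :
    (∀ j < n, ∃ i ∈ c.blockStarts, i ≤ j ∧ j < i + d) ↔ ∀ x ∈ c.blocks, x ≤ d := by
  simp only [blockStarts, mem_image, mem_range, exists_exists_and_eq_and]
  constructor
  · intro h x hx
    obtain ⟨i, hi, rfl⟩ := List.mem_iff_getElem.1 hx
    rw [blocks_length] at hi
    have hsucc := c.sizeUpTo_succ hi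
    have hpos := c.blocks_pos' i hi
    obtain ⟨i', -, hle, hlt⟩ := h (c.sizeUpTo (i + 1) - 1) (by have := c.sizeUpTo_le (i + 1); omega)
    have hi' : i' ≤ i := by
      by_contra! h'
      have := c.monotone_sizeUpTo (show i + 1 ≤ i' by omega)
      omega
    have := c.monotone_sizeUpTo hi'
    omega
  · intro h j hj
    have hlt : j < c.sizeUpTo (c.index ⟨j, hj⟩) + c.blocksFun (c.index ⟨j, hj⟩) := by
      rw [← c.sizeUpTo_succ']
      exact c.lt_sizeUpTo_index_succ ⟨j, hj⟩
    have := h _ (c.blocksFun_mem_blocks (c.index ⟨j, hj⟩))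
    exact ⟨c.index ⟨j, hj⟩, (c.index ⟨j, hj⟩).is_lt, c.sizeUpTo_index_le _, by omega⟩

lemma isWindowCover_blockStarts_iff :
    IsWindowCover n c.blockStarts ↔ ∀ x ∈ c.blocks, x ≤ c.blocks.reverse.headI := by
  have h : n - c.blockStarts.sup id = c.blocks.reverse.headI := by
    have := c.sup_blockStarts_add_last
    omega
  rw [IsWindowCover, h, forall_exists_blockStarts_iff]

lemma blockStarts_injective : Function.Injective (blockStarts : Composition n → Finset ℕ) := by
  intro c c' h
  apply (compositionEquiv n).injective
  apply CompositionAsSet.ext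
  apply map_injective Fin.valEmbedding
  simp only [compositionEquiv, Equiv.coe_fn_mk, toCompositionAsSet_boundaries,
    map_valEmbedding_boundaries, h]

lemma exists_blockStarts_eq {S : Finset ℕ} (hS : S ⊆ range n) (h0 : 0 ∈ S) :
    ∃ c : Composition n, c.blockStarts = S := by
  let cs : CompositionAsSet n :=
    ⟨insert (Fin.last n) ({i | (i : ℕ) ∈ S} : Finset (Fin (n + 1))), by simp [h0], by simp⟩
  refine ⟨cs.toComposition, ?_⟩
  have hmap := cs.toComposition.map_valEmbedding_boundaries
  rw [CompositionAsSet.toComposition_boundaries] at hmap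
  have hnS : n ∉ S := fun h => by simpa using hS h
  have hnc : n ∉ cs.toComposition.blockStarts := fun h => by
    simpa using cs.toComposition.blockStarts_subset_range h
  calc cs.toComposition.blockStarts = (insert n cs.toComposition.blockStarts).erase n :=
        (erase_insert hnc).symm
    _ = (insert n S).erase n := by
      rw [← hmap]
      congr 1
      ext x
      simp only [cs, mem_map, mem_insert, mem_filter, mem_univ, true_and, Fin.valEmbedding_apply]
      constructor
      · rintro ⟨i, rfl | hi, rfl⟩
        · exact Or.inl rfl
        · exact Or.inr hi
      · rintro (hx | hx)
        · exact ⟨Fin.last n, Or.inl rfl, hx.symm⟩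
        · exact ⟨⟨x, by have := mem_range.1 (hS hx); omega⟩, Or.inr hx, rfl⟩
    _ = S := erase_insert hnS

end Composition

lemma T_eq_card (k t : ℕ) :
    T k t = #{c : Composition k | c.length = t ∧ ∀ x ∈ c.blocks, x ≤ c.blocks.reverse.headI} := by
  let e : {l : List ℕ // l.length = t ∧ l.sum = k ∧ (∀ x ∈ l, 0 < x) ∧ ∀ x ∈ l, x ≤ l.headI} ≃
      {c : Composition k // c.length = t ∧ ∀ x ∈ c.blocks, x ≤ c.blocks.reverse.headI} :=
    { toFun := fun l => ⟨⟨l.1.reverse, fun hx => l.2.2.2.1 _ (List.mem_reverse.1 hx),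
          by simp [l.2.2.1]⟩, by simp [Composition.length, l.2.1], by simpa using l.2.2.2.2⟩
      invFun := fun c => ⟨c.1.blocks.reverse, by simp [← c.2.1, Composition.length],
          by simp [c.1.blocks_sum], fun x hx => c.1.blocks_pos (List.mem_reverse.1 hx),
          by simpa using c.2.2⟩
      left_inv := fun l => Subtype.ext (List.reverse_reverse _)
      right_inv := fun c => Subtype.ext (Composition.ext (List.reverse_reverse _)) }
  rw [T, Nat.card_congr e, Nat.card_eq_fintype_card, Fintype.card_subtype]

section Compositions

variable {k : ℕ}

lemma sum_T_mul_eq_sum_compositions (hk : 1 ≤ k) (f : ℕ → ℕ) :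
    ∑ t ∈ Icc 1 k, T k t * f t =
      ∑ c : Composition k with ∀ x ∈ c.blocks, x ≤ c.blocks.reverse.headI, f c.length := by
  have hmaps : ∀ c ∈ ({c | ∀ x ∈ c.blocks, x ≤ c.blocks.reverse.headI} : Finset (Composition k)),
      c.length ∈ Icc 1 k := fun c _ =>
    mem_Icc.2 ⟨c.length_pos_iff.2 hk, c.length_le⟩
  rw [← sum_fiberwise_of_maps_to hmaps]
  refine sum_congr rfl fun t _ => ?_
  rw [sum_congr rfl fun c hc => by rw [(mem_filter.1 hc).2], sum_const, smul_eq_mul, T_eq_card,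
    filter_filter]
  simp only [and_comm]

lemma sum_isWindowCover_eq_sum_compositions (hk : 1 ≤ k) (f : ℕ → ℕ) :
    ∑ S ∈ (range k).powerset with IsWindowCover k S, f #S =
      ∑ c : Composition k with ∀ x ∈ c.blocks, x ≤ c.blocks.reverse.headI, f c.length := by
  symm
  refine sum_nbij Composition.blockStarts (fun c hc => ?_)
    Composition.blockStarts_injective.injOn (fun S hS => ?_) fun c _ => by rw [c.card_blockStarts]
  · exact mem_filter.2 ⟨mem_powerset.2 c.blockStarts_subset_range,
      c.isWindowCover_blockStarts_iff.2 (mem_filter.1 hc).2⟩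
  · obtain ⟨hSk, hcov⟩ := mem_filter.1 hS
    obtain ⟨i, hiS, hi0, -⟩ := hcov 0 hk
    obtain ⟨c, rfl⟩ := Composition.exists_blockStarts_eq (mem_powerset.1 hSk)
      (Nat.le_zero.1 hi0 ▸ hiS)
    exact ⟨c, mem_filter.2 ⟨mem_univ _, c.isWindowCover_blockStarts_iff.1 hcov⟩, rfl⟩

end Compositions

/-- the number of base-`b` dismal divisors of the repunit
`(b^k - 1)/(b - 1)`. -/
theorem dismal_divisors_repunit (b : ℕ) (hb : 2 ≤ b) (k : ℕ) (hk : 1 ≤ k) :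
    dnum b ((b ^ k - 1) / (b - 1)) = ∑ t ∈ Finset.Icc 1 k, T k t * (b - 1) ^ t := by
  rw [← Nat.geomSum_eq hb, dnum, ← repunit, card_ddivisors_repunit hb,
    sum_isWindowCover_eq_sum_compositions hk, sum_T_mul_eq_sum_compositions hk]
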